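/- Let A be an n×n real matrix and let L_A be the homological operator on vector-valued polynomial maps defined by (L_A f)(y) = Df(y)·(Ay) − A f(y). Then with respect to the inner product ⟨p, q⟩ = Σ_m m! ⟨p_m, q_m⟩ (extended componentwise to vector polynomials), the adjoint of L_A equals L_{A*}, i.e., ⟨L_A p, q⟩ = ⟨p, L_{A*} q⟩ for all homogeneous vector polynomials p, q of degree k. -/

import Mathlib

open MvPolynomial Matrix

/-- The inner product ⟨p,q⟩ = Σ_m m! p_m q_m on real polynomials in n variables. -/
noncomputable def polyInner {n : ℕ} (p q : MvPolynomial (Fin n) ℝ) : ℝ :=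
  ∑ m ∈ p.support ∪ q.support,
    (∏ i, ((m i).factorial : ℝ)) * p.coeff m * q.coeff m

/-- The componentwise inner product on vector-valued polynomials. -/
noncomputable def vecInner {n : ℕ} (p q : Fin n → MvPolynomial (Fin n) ℝ) : ℝ :=
  ∑ i, polyInner (p i) (q i)

/-- The homological operator (L_A f)(y) = Df(y)·(Ay) − A f(y), on polynomial
vector fields written in coordinates. -/
noncomputable def LieOp {n : ℕ} (A : Matrix (Fin n) (Fin n) ℝ)
    (f : Fin n → MvPolynomial (Fin n) ℝ) : Fin n → MvPolynomial (Fin n) ℝ :=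
  fun i => (∑ j, pderiv j (f i) * ∑ l, C (A j l) * X l) - ∑ j, C (A i j) * f j

/-!
Multiplication by `X l` and the partial derivative `∂_l` are adjoint for this inner product:
the coefficient of `y^m` in `∂_l g` is `(m_l + 1) g_{m + e_l}`, and `m_l + 1` is exactly the
ratio `(m + e_l)! / m!` of the weights. Since `L_A f = Σ_{j,l} A_{jl} X_l ∂_j f - A f`, moving
each `X_l` across turns `⟨L_A p, q⟩` into `Σ A_{jl} ⟨∂_j p, ∂_l q⟩ - ⟨A p, q⟩`, an expression
that is visibly symmetric under `(A, p, q) ↦ (Aᵀ, q, p)`.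
-/

section PolyInner

variable {n : ℕ}

theorem polyInner_eq_sum_of_subset (p q : MvPolynomial (Fin n) ℝ) {S : Finset (Fin n →₀ ℕ)}
    (hS : p.support ∩ q.support ⊆ S) :
    polyInner p q = ∑ m ∈ S, (∏ i, ((m i).factorial : ℝ)) * p.coeff m * q.coeff m := by
  have hsum : ∀ T, p.support ∩ q.support ⊆ T →
      ∑ m ∈ T, (∏ i, ((m i).factorial : ℝ)) * p.coeff m * q.coeff m
        = ∑ m ∈ p.support ∩ q.support, (∏ i, ((m i).factorial : ℝ)) * p.coeff m * q.coeff m := by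
    refine fun T hT => (Finset.sum_subset hT fun m _ hm => ?_).symm
    rcases not_and_or.mp (Finset.mem_inter.not.mp hm) with h | h <;>
      simp [notMem_support_iff.mp h]
  rw [polyInner, hsum _ Finset.inter_subset_union, hsum S hS]

theorem polyInner_eq_sum_support_left (p q : MvPolynomial (Fin n) ℝ) :
    polyInner p q = ∑ m ∈ p.support, (∏ i, ((m i).factorial : ℝ)) * p.coeff m * q.coeff m :=
  polyInner_eq_sum_of_subset p q Finset.inter_subset_left

theorem polyInner_comm (p q : MvPolynomial (Fin n) ℝ) : polyInner p q = polyInner q p := by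
  rw [polyInner, polyInner, Finset.union_comm]
  exact Finset.sum_congr rfl fun m _ => by ring

theorem polyInner_add_left (p p' q : MvPolynomial (Fin n) ℝ) :
    polyInner (p + p') q = polyInner p q + polyInner p' q := by
  classical
  have hsub : ∀ r : MvPolynomial (Fin n) ℝ, r.support ⊆ p.support ∪ p'.support →
      r.support ∩ q.support ⊆ p.support ∪ p'.support :=
    fun r hr => Finset.inter_subset_left.trans hr
  rw [polyInner_eq_sum_of_subset _ _ (hsub _ support_add),
    polyInner_eq_sum_of_subset _ _ (hsub _ Finset.subset_union_left),
    polyInner_eq_sum_of_subset _ _ (hsub _ Finset.subset_union_right),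
    ← Finset.sum_add_distrib]
  exact Finset.sum_congr rfl fun m _ => by rw [coeff_add]; ring

theorem polyInner_smul_left (r : ℝ) (p q : MvPolynomial (Fin n) ℝ) :
    polyInner (r • p) q = r * polyInner p q := by
  rw [polyInner_eq_sum_of_subset _ _ (Finset.inter_subset_left.trans support_smul),
    polyInner_eq_sum_support_left, Finset.mul_sum]
  exact Finset.sum_congr rfl fun m _ => by rw [coeff_smul, smul_eq_mul]; ring

noncomputable def polyInnerLeft (q : MvPolynomial (Fin n) ℝ) : MvPolynomial (Fin n) ℝ →ₗ[ℝ] ℝ where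
  toFun p := polyInner p q
  map_add' p p' := polyInner_add_left p p' q
  map_smul' r p := polyInner_smul_left r p q

theorem polyInner_sub_left (p p' q : MvPolynomial (Fin n) ℝ) :
    polyInner (p - p') q = polyInner p q - polyInner p' q :=
  map_sub (polyInnerLeft q) p p'

theorem polyInner_sum_left {ι : Type*} (s : Finset ι) (f : ι → MvPolynomial (Fin n) ℝ)
    (q : MvPolynomial (Fin n) ℝ) : polyInner (∑ j ∈ s, f j) q = ∑ j ∈ s, polyInner (f j) q :=
  map_sum (polyInnerLeft q) f s

theorem polyInner_C_mul_left (r : ℝ) (p q : MvPolynomial (Fin n) ℝ) :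
    polyInner (C r * p) q = r * polyInner p q := by
  rw [C_mul', polyInner_smul_left]

theorem prod_factorial_add_single (m : Fin n →₀ ℕ) (l : Fin n) :
    ∏ i, (((m + Finsupp.single l 1 : Fin n →₀ ℕ) i).factorial : ℝ)
      = (∏ i, ((m i).factorial : ℝ)) * ((m l : ℝ) + 1) := by
  have hfac : ∀ i, (((m + Finsupp.single l 1 : Fin n →₀ ℕ) i).factorial : ℝ)
      = (m i).factorial * if l = i then (m l : ℝ) + 1 else 1 := by
    intro i
    by_cases h : l = i
    · subst h
      simp [Nat.factorial_succ, mul_comm]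
    · simp [h]
  simp only [hfac, Finset.prod_mul_distrib, Finset.prod_ite_eq, Finset.mem_univ, if_true]

theorem polyInner_mul_X_left (f g : MvPolynomial (Fin n) ℝ) (l : Fin n) :
    polyInner (f * X l) g = polyInner f (pderiv l g) := by
  rw [polyInner_eq_sum_support_left, support_mul_X, Finset.sum_map,
    polyInner_eq_sum_support_left]
  refine Finset.sum_congr rfl fun m _ => ?_
  rw [addRightEmbedding_apply, coeff_mul_X, coeff_pderiv, prod_factorial_add_single]
  ring

end PolyInner

section LieOp

variable {n : ℕ}

theorem vecInner_comm (u v : Fin n → MvPolynomial (Fin n) ℝ) : vecInner u v = vecInner v u :=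
  Finset.sum_congr rfl fun i _ => polyInner_comm (u i) (v i)

theorem vecInner_lieOp_left (B : Matrix (Fin n) (Fin n) ℝ) (u v : Fin n → MvPolynomial (Fin n) ℝ) :
    vecInner (LieOp B u) v
      = ∑ i, ∑ j, ∑ l, B j l * polyInner (pderiv j (u i)) (pderiv l (v i))
        - ∑ i, ∑ j, B i j * polyInner (u j) (v i) := by
  rw [vecInner, ← Finset.sum_sub_distrib]
  refine Finset.sum_congr rfl fun i _ => ?_
  rw [LieOp, polyInner_sub_left, polyInner_sum_left, polyInner_sum_left]
  congr 1
  · refine Finset.sum_congr rfl fun j _ => ?_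
    rw [Finset.mul_sum, polyInner_sum_left]
    refine Finset.sum_congr rfl fun l _ => ?_
    rw [mul_left_comm, polyInner_C_mul_left, polyInner_mul_X_left]
  · exact Finset.sum_congr rfl fun j _ => polyInner_C_mul_left _ _ _

end LieOp

theorem lieOp_adjoint_general {n : ℕ} (A : Matrix (Fin n) (Fin n) ℝ)
    (p q : Fin n → MvPolynomial (Fin n) ℝ) :
    vecInner (LieOp A p) q = vecInner p (LieOp Aᵀ q) := by
  rw [vecInner_comm p, vecInner_lieOp_left, vecInner_lieOp_left]
  congr 1
  · refine Finset.sum_congr rfl fun i _ => ?_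
    rw [Finset.sum_comm]
    simp only [transpose_apply, polyInner_comm (pderiv _ (q i))]
  · rw [Finset.sum_comm]
    simp only [transpose_apply, polyInner_comm (q _)]

theorem lieOp_adjoint {n k : ℕ} (A : Matrix (Fin n) (Fin n) ℝ)
    (p q : Fin n → MvPolynomial (Fin n) ℝ)
    (hp : ∀ i, (p i).IsHomogeneous k) (hq : ∀ i, (q i).IsHomogeneous k) :
    vecInner (LieOp A p) q = vecInner p (LieOp Aᵀ q) :=
  lieOp_adjoint_general A p q
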